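/- Let T1 and T2 be finite trees with |V(T1)| = m, |V(T2)| = n, diam(T1) = d1, diam(T2) = d2, each having exactly two weight centers, and let p = mn, d = d1 + d2. If rn(T1 □ T2) = (p − 1)(d − 1) − 2n·L(T1) − 2m·L(T2) + 1, then m = n = 2, i.e., both T1 and T2 are the path P2 on two vertices. -/

import Mathlib

open SimpleGraph Finset

/-- The weight of a graph at a vertex: the sum of the distances to all vertices. -/
noncomputable def gWeight {V : Type*} [Fintype V] (G : SimpleGraph V) (v : V) : ℕ :=
  ∑ u, G.dist u v

/-- A vertex is a weight center if its weight is minimum among all vertices. -/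
def IsWeightCenter {V : Type*} [Fintype V] (G : SimpleGraph V) (v : V) : Prop :=
  ∀ u, gWeight G v ≤ gWeight G u

/-- The level of a vertex: the minimum distance to a weight center. -/
noncomputable def level {V : Type*} [Fintype V] (G : SimpleGraph V) (u : V) : ℕ :=
  sInf {d | ∃ w, IsWeightCenter G w ∧ d = G.dist u w}

/-- The total level of a graph: the sum of the levels of all vertices. -/
noncomputable def totalLevel {V : Type*} [Fintype V] (G : SimpleGraph V) : ℕ :=
  ∑ u, level G u

/-- The diameter: the maximum distance between two vertices. -/
noncomputable def graphDiam {V : Type*} [Fintype V] (G : SimpleGraph V) : ℕ :=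
  Finset.univ.sup fun p : V × V => G.dist p.1 p.2

/-- A radio labeling: |f u - f v| ≥ diam + 1 - d(u,v) for all distinct u, v. -/
def IsRadioLabeling {V : Type*} [Fintype V] (G : SimpleGraph V) (f : V → ℕ) : Prop :=
  ∀ u v : V, u ≠ v → (graphDiam G : ℤ) + 1 - G.dist u v ≤ |(f u : ℤ) - (f v : ℤ)|

/-- The span of a labeling: the maximum difference between two labels. -/
noncomputable def radioSpan {V : Type*} [Fintype V] (f : V → ℕ) : ℕ :=
  Finset.univ.sup fun p : V × V => ((f p.1 : ℤ) - (f p.2 : ℤ)).natAbs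

/-- The radio number: the minimum span of a radio labeling. -/
noncomputable def radioNumber {V : Type*} [Fintype V] (G : SimpleGraph V) : ℕ :=
  sInf {s | ∃ f : V → ℕ, IsRadioLabeling G f ∧ s = radioSpan f}

/-- The star K_{1,n}, with center vertex 0 adjacent to n leaves. -/
def starGraph (n : ℕ) : SimpleGraph (Fin (n + 1)) where
  Adj x y := x ≠ y ∧ (x = 0 ∨ y = 0)
  symm := ⟨fun _ _ h => ⟨h.1.symm, h.2.symm⟩⟩
  loopless := ⟨fun _ h => h.1 rfl⟩

open Classical in
/-- δ(x,x') = 1 if x and x' lie in different connected components of the graph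
obtained by deleting the edge ww', and 0 otherwise. -/
noncomputable def deltaEdge {V : Type*} (T : SimpleGraph V) (w w' x x' : V) : ℕ :=
  if (T.deleteEdges {s(w, w')}).connectedComponentMk x =
      (T.deleteEdges {s(w, w')}).connectedComponentMk x' then 0 else 1


section AuxLemmas

variable {V : Type*}

lemma tree_path_length {T : SimpleGraph V} (hT : T.IsTree) {a b : V}
    (p : T.Walk a b) (hp : p.IsPath) : p.length = T.dist a b := by
  obtain ⟨q, hq, hql⟩ := hT.isConnected.exists_path_of_dist a b
  obtain ⟨r, hr, hru⟩ := hT.existsUnique_path a b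
  rw [hru p hp, hru q hq] at *
  omega

lemma tree_dist_split {T : SimpleGraph V} (hT : T.IsTree) {a b z : V}
    (p : T.Walk a b) (hp : p.IsPath) (hz : z ∈ p.support) :
    T.dist a z + T.dist z b = T.dist a b := by
  classical
  have h1 := tree_path_length hT (p.takeUntil z hz) (hp.takeUntil hz)
  have h2 := tree_path_length hT (p.dropUntil z hz) (hp.dropUntil hz)
  have h3 := tree_path_length hT p hp
  have h4 : (p.takeUntil z hz).length + (p.dropUntil z hz).length = p.length := by
    rw [← SimpleGraph.Walk.length_append, SimpleGraph.Walk.take_spec]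
  omega

lemma isPath_append {T : SimpleGraph V} {a b c : V} {p : T.Walk a b} {q : T.Walk b c}
    (hp : p.IsPath) (hq : q.IsPath)
    (h : ∀ z, z ∈ p.support → z ∈ q.support → z = b) : (p.append q).IsPath := by
  rw [SimpleGraph.Walk.isPath_def, SimpleGraph.Walk.support_append]
  apply List.Nodup.append hp.support_nodup (hq.support_nodup.sublist (List.tail_sublist _))
  intro z hzp hzq
  have hzq' : z ∈ q.support := List.mem_of_mem_tail hzq
  have hzb : z = b := h z hzp hzq'
  subst hzb
  have hnd := hq.support_nodup
  rw [q.support_eq_cons] at hnd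
  exact (List.nodup_cons.mp hnd).1 hzq

/-- The key "max formula": for the neighbor `v` of `w` on the path towards `w'`. -/
lemma exists_second_vertex {T : SimpleGraph V} (hT : T.IsTree) {w w' : V}
    (h2 : 2 ≤ T.dist w w') :
    ∃ v : V, T.dist w v = 1 ∧ T.dist v w' + 1 = T.dist w w' ∧
      ∀ x : V, (T.dist x v : ℤ) =
        max ((T.dist x w : ℤ) - 1) ((T.dist x w' : ℤ) - (T.dist v w' : ℤ)) := by
  classical
  obtain ⟨P, hP, hPl⟩ := hT.isConnected.exists_path_of_dist w w'
  set k := T.dist w w' with hk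
  cases P with
  | nil => simp at hPl; omega
  | @cons _ v _ hadj q =>
    have hqp : q.IsPath := hP.of_cons
    have hql : q.length = T.dist v w' := tree_path_length hT q hqp
    have hlen : q.length + 1 = k := by
      simpa [SimpleGraph.Walk.length_cons] using hPl
    have hdvw : T.dist v w' + 1 = k := by omega
    have hdwv : T.dist w v = 1 := by
      rw [SimpleGraph.dist_eq_one_iff_adj]; exact hadj
    refine ⟨v, hdwv, hdvw, ?_⟩
    intro x
    obtain ⟨Q, hQ, hQl⟩ := hT.isConnected.exists_path_of_dist x v
    by_cases hw : w ∈ Q.support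
    · -- dist x v = dist x w + 1 and dist x w' = dist x w + k
      have hsplit : T.dist x w + T.dist w v = T.dist x v := tree_dist_split hT Q hQ hw
      have hxv : T.dist x v = T.dist x w + 1 := by omega
      -- build the path x → w → w'
      have hPw : (SimpleGraph.Walk.cons hadj q).IsPath := hP
      have hjunc : ∀ z, z ∈ (Q.takeUntil w hw).support →
          z ∈ (SimpleGraph.Walk.cons hadj q).support → z = w := by
        intro z hz1 hz2
        by_contra hzw
        have hz1' : z ∈ Q.support := Q.support_takeUntil_subset hw hz1
        have hs1 : T.dist x z + T.dist z w = T.dist x w :=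
          tree_dist_split hT (Q.takeUntil w hw) (hQ.takeUntil hw) hz1
        have hz2' : z ∈ q.support := by
          simp only [SimpleGraph.Walk.support_cons, List.mem_cons] at hz2
          rcases hz2 with hh | hh
          · exact absurd hh hzw
          · exact hh
        have hs2 : T.dist v z + T.dist z w' = T.dist v w' :=
          tree_dist_split hT q hqp hz2'
        have hs3 : T.dist w z + T.dist z w' = k :=
          tree_dist_split hT (SimpleGraph.Walk.cons hadj q) hP
            (by rw [SimpleGraph.Walk.support_cons]; right; exact hz2')
        have htr : T.dist x v ≤ T.dist x z + T.dist z v := hT.isConnected.dist_triangle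
        have hc1 : T.dist z v = T.dist v z := SimpleGraph.dist_comm
        have hc2 : T.dist z w = T.dist w z := SimpleGraph.dist_comm
        omega
      have hRp : ((Q.takeUntil w hw).append (SimpleGraph.Walk.cons hadj q)).IsPath :=
        isPath_append (hQ.takeUntil hw) hPw hjunc
      have hRl := tree_path_length hT _ hRp
      rw [SimpleGraph.Walk.length_append] at hRl
      have ht1 : (Q.takeUntil w hw).length = T.dist x w :=
        tree_path_length hT _ (hQ.takeUntil hw)
      have hxw' : T.dist x w' = T.dist x w + k := by
        rw [← hRl, ht1]; simp [SimpleGraph.Walk.length_cons]; omega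
      rw [hxv, hxw']
      have hcast : (T.dist v w' : ℤ) + 1 = (k : ℤ) := by exact_mod_cast hdvw
      push_cast
      omega
    · -- dist x v = dist x w - 1
      have hRp : (Q.append (SimpleGraph.Walk.cons (T.adj_symm hadj) SimpleGraph.Walk.nil)).IsPath := by
        apply isPath_append hQ
        · simp [SimpleGraph.Walk.cons_isPath_iff, hadj.ne']
        · intro z hz1 hz2
          simp [SimpleGraph.Walk.support_cons, SimpleGraph.Walk.support_nil] at hz2
          rcases hz2 with h | h
          · exact h
          · subst h; exact absurd hz1 hw
      have hRl := tree_path_length hT _ hRp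
      rw [SimpleGraph.Walk.length_append] at hRl
      simp [SimpleGraph.Walk.length_cons] at hRl
      -- hRl : Q.length + 1 = T.dist x w
      have hxw : T.dist x w = T.dist x v + 1 := by omega
      have htr : T.dist x w' ≤ T.dist x v + T.dist v w' := hT.isConnected.dist_triangle
      rw [hxw]
      push_cast
      omega

lemma weight_centers_adj [Fintype V] {T : SimpleGraph V} (hT : T.IsTree) {w w' : V}
    (hw : IsWeightCenter T w) (hw' : IsWeightCenter T w') (hne : w ≠ w') : T.Adj w w' := by
  have hconn := hT.isConnected
  have hk1 : 1 ≤ T.dist w w' := hconn.pos_dist_of_ne hne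
  by_contra hadj
  have hk2 : 2 ≤ T.dist w w' := by
    rcases Nat.lt_or_ge (T.dist w w') 2 with h | h
    · have h1 : T.dist w w' = 1 := by omega
      rw [SimpleGraph.dist_eq_one_iff_adj] at h1
      exact absurd h1 hadj
    · exact h
  obtain ⟨v, hv1, hv2, hv3⟩ := exists_second_vertex hT hk2
  have hk2' : 2 ≤ T.dist w' w := by rwa [SimpleGraph.dist_comm] at hk2
  obtain ⟨u, hu1, hu2, hu3⟩ := exists_second_vertex hT hk2'
  have hd'' : T.dist w' w = T.dist w w' := SimpleGraph.dist_comm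
  have key : ∀ x : V, (T.dist x v : ℤ) + T.dist x u ≤ T.dist x w + T.dist x w' := by
    intro x
    have h1 := hv3 x
    have h2 := hu3 x
    have tri1 : T.dist x w' ≤ T.dist x w + T.dist w w' := hconn.dist_triangle
    have tri2 : T.dist x w ≤ T.dist x w' + T.dist w' w := hconn.dist_triangle
    rcases max_cases ((T.dist x w : ℤ) - 1) ((T.dist x w' : ℤ) - (T.dist v w' : ℤ)) with
      ⟨hm, hm'⟩ | ⟨hm, hm'⟩ <;>
    rcases max_cases ((T.dist x w' : ℤ) - 1) ((T.dist x w : ℤ) - (T.dist u w : ℤ)) with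
      ⟨hn, hn'⟩ | ⟨hn, hn'⟩ <;>
    omega
  have keyv : (T.dist v v : ℤ) + T.dist v u ≤ T.dist v w + T.dist v w' - 2 := by
    have h2 := hu3 v
    have hvv : T.dist v v = 0 := SimpleGraph.dist_self
    have hvw : T.dist v w = 1 := by rw [SimpleGraph.dist_comm]; exact hv1
    rcases max_cases ((T.dist v w' : ℤ) - 1) ((T.dist v w : ℤ) - (T.dist u w : ℤ)) with
      ⟨hn, hn'⟩ | ⟨hn, hn'⟩ <;>
    omega
  have hlt : ∑ x, ((T.dist x v : ℤ) + T.dist x u) < ∑ x, ((T.dist x w : ℤ) + T.dist x w') := by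
    apply Finset.sum_lt_sum (fun i _ => key i)
    refine ⟨v, Finset.mem_univ v, ?_⟩
    have := keyv
    have h1 : T.dist v w = 1 := by rw [SimpleGraph.dist_comm]; exact hv1
    omega
  have hc1 : gWeight T w ≤ gWeight T v := hw v
  have hc2 : gWeight T w' ≤ gWeight T u := hw' u
  have hgv : (gWeight T v : ℤ) = ∑ x, (T.dist x v : ℤ) := by simp [gWeight]
  have hgu : (gWeight T u : ℤ) = ∑ x, (T.dist x u : ℤ) := by simp [gWeight]
  have hgw : (gWeight T w : ℤ) = ∑ x, (T.dist x w : ℤ) := by simp [gWeight]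
  have hgw' : (gWeight T w' : ℤ) = ∑ x, (T.dist x w' : ℤ) := by simp [gWeight]
  rw [Finset.sum_add_distrib, Finset.sum_add_distrib, ← hgv, ← hgu, ← hgw, ← hgw'] at hlt
  have hc1' : (gWeight T w : ℤ) ≤ gWeight T v := by exact_mod_cast hc1
  have hc2' : (gWeight T w' : ℤ) ≤ gWeight T u := by exact_mod_cast hc2
  omega

/-- nearest of the two centers -/
noncomputable def nearCtr (T : SimpleGraph V) (w w' : V) (x : V) : V :=
  if T.dist x w ≤ T.dist x w' then w else w'

lemma nearCtr_mem (T : SimpleGraph V) (w w' x : V) :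
    nearCtr T w w' x = w ∨ nearCtr T w w' x = w' := by
  unfold nearCtr; split <;> simp

section
variable [Fintype V] {T : SimpleGraph V} {w w' : V}

lemma level_eq_min (hcs : ∀ c, IsWeightCenter T c ↔ c = w ∨ c = w') (x : V) :
    level T x = min (T.dist x w) (T.dist x w') := by
  have hset : {d | ∃ c, IsWeightCenter T c ∧ d = T.dist x c} =
      {T.dist x w, T.dist x w'} := by
    ext d
    simp only [Set.mem_setOf_eq, Set.mem_insert_iff, Set.mem_singleton_iff]
    constructor
    · rintro ⟨c, hc, rfl⟩
      rcases (hcs c).mp hc with rfl | rfl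
      · left; rfl
      · right; rfl
    · rintro (rfl | rfl)
      · exact ⟨w, (hcs w).mpr (Or.inl rfl), rfl⟩
      · exact ⟨w', (hcs w').mpr (Or.inr rfl), rfl⟩
  rw [level, hset, csInf_pair]

lemma dist_nearCtr (hcs : ∀ c, IsWeightCenter T c ↔ c = w ∨ c = w') (x : V) :
    T.dist x (nearCtr T w w' x) = level T x := by
  rw [level_eq_min hcs]
  unfold nearCtr; split <;> omega

lemma dist_ctr_le (hconn : T.Connected) (hadj : T.Adj w w')
    (hcs : ∀ c, IsWeightCenter T c ↔ c = w ∨ c = w') (x c : V) (hc : c = w ∨ c = w') :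
    T.dist x c ≤ level T x + 1 := by
  have h1 : T.dist w w' = 1 := SimpleGraph.dist_eq_one_iff_adj.mpr hadj
  have h2 : T.dist w' w = 1 := by rwa [SimpleGraph.dist_comm] at h1
  have t1 : T.dist x w ≤ T.dist x w' + T.dist w' w := hconn.dist_triangle
  have t2 : T.dist x w' ≤ T.dist x w + T.dist w w' := hconn.dist_triangle
  rw [level_eq_min hcs]
  rcases hc with rfl | rfl <;> omega

lemma dist_le_level_add (hconn : T.Connected) (hadj : T.Adj w w')
    (hcs : ∀ c, IsWeightCenter T c ↔ c = w ∨ c = w') (x y : V) :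
    T.dist x y ≤ level T x + level T y + 1 := by
  have t : T.dist x y ≤ T.dist x (nearCtr T w w' x) + T.dist (nearCtr T w w' x) y :=
    hconn.dist_triangle
  have h1 := dist_nearCtr hcs x
  have h2 : T.dist (nearCtr T w w' x) y = T.dist y (nearCtr T w w' x) := SimpleGraph.dist_comm
  have h3 : T.dist y (nearCtr T w w' x) ≤ level T y + 1 :=
    dist_ctr_le hconn hadj hcs y _ (nearCtr_mem T w w' x)
  omega

lemma dist_le_level_add_of_eq (hconn : T.Connected)
    (hcs : ∀ c, IsWeightCenter T c ↔ c = w ∨ c = w') {x y : V}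
    (hxy : nearCtr T w w' x = nearCtr T w w' y) :
    T.dist x y ≤ level T x + level T y := by
  have t : T.dist x y ≤ T.dist x (nearCtr T w w' x) + T.dist (nearCtr T w w' x) y :=
    hconn.dist_triangle
  have h1 := dist_nearCtr hcs x
  have h2 : T.dist (nearCtr T w w' x) y = T.dist y (nearCtr T w w' y) := by
    rw [hxy]; exact SimpleGraph.dist_comm
  have h3 := dist_nearCtr hcs y
  omega

end

section BoxProd
variable {V₁ V₂ : Type*} {G : SimpleGraph V₁} {H : SimpleGraph V₂}

lemma boxProd_walk_length_ge (hG : G.Connected) (hH : H.Connected) :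
    ∀ {x y : V₁ × V₂} (W : (G □ H).Walk x y),
      G.dist x.1 y.1 + H.dist x.2 y.2 ≤ W.length := by
  intro x y W
  induction W with
  | nil => simp
  | @cons a b c h W ih =>
    rw [SimpleGraph.Walk.length_cons]
    rcases SimpleGraph.boxProd_adj.mp h with ⟨h1, h2⟩ | ⟨h1, h2⟩
    · have t : G.dist a.1 c.1 ≤ G.dist a.1 b.1 + G.dist b.1 c.1 := hG.dist_triangle
      have e : G.dist a.1 b.1 = 1 := SimpleGraph.dist_eq_one_iff_adj.mpr h1
      rw [← h2] at ih
      omega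
    · have t : H.dist a.2 c.2 ≤ H.dist a.2 b.2 + H.dist b.2 c.2 := hH.dist_triangle
      have e : H.dist a.2 b.2 = 1 := SimpleGraph.dist_eq_one_iff_adj.mpr h1
      rw [← h2] at ih
      omega

lemma boxProd_dist (hG : G.Connected) (hH : H.Connected) (x y : V₁ × V₂) :
    (G □ H).dist x y = G.dist x.1 y.1 + H.dist x.2 y.2 := by
  apply le_antisymm
  · obtain ⟨p, hpl⟩ := hG.exists_walk_length_eq_dist x.1 y.1
    obtain ⟨q, hql⟩ := hH.exists_walk_length_eq_dist x.2 y.2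
    refine le_trans (SimpleGraph.dist_le
      ((SimpleGraph.Walk.boxProdLeft H x.2 p).append (SimpleGraph.Walk.boxProdRight G y.1 q))) ?_
    rw [SimpleGraph.Walk.length_append]
    simp only [SimpleGraph.Walk.boxProdLeft, SimpleGraph.Walk.boxProdRight,
      SimpleGraph.Walk.length_map]
    erw [SimpleGraph.Walk.length_map, SimpleGraph.Walk.length_map]
    omega
  · obtain ⟨W, hWl⟩ := (hG.boxProd hH).exists_walk_length_eq_dist x y
    rw [← hWl]
    exact boxProd_walk_length_ge hG hH W

end BoxProd

section Diam
variable [Fintype V] {T : SimpleGraph V}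

lemma dist_le_graphDiam (a b : V) : T.dist a b ≤ graphDiam T :=
  Finset.le_sup (f := fun p : V × V => T.dist p.1 p.2) (Finset.mem_univ (a, b))

lemma exists_graphDiam [Nonempty V] : ∃ a b : V, T.dist a b = graphDiam T := by
  obtain ⟨p, _, hp⟩ := Finset.exists_mem_eq_sup Finset.univ Finset.univ_nonempty
    (fun p : V × V => T.dist p.1 p.2)
  exact ⟨p.1, p.2, hp.symm⟩

end Diam

lemma graphDiam_boxProd {V₁ V₂ : Type*} [Fintype V₁] [Fintype V₂] [Nonempty V₁] [Nonempty V₂]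
    {G : SimpleGraph V₁} {H : SimpleGraph V₂} (hG : G.Connected) (hH : H.Connected) :
    graphDiam (G □ H) = graphDiam G + graphDiam H := by
  apply le_antisymm
  · apply Finset.sup_le
    intro p _
    rw [boxProd_dist hG hH]
    exact Nat.add_le_add (dist_le_graphDiam _ _) (dist_le_graphDiam _ _)
  · obtain ⟨a, b, hab⟩ := exists_graphDiam (T := G)
    obtain ⟨c, e, hce⟩ := exists_graphDiam (T := H)
    have := dist_le_graphDiam (T := G □ H) (a, c) (b, e)
    rwa [boxProd_dist hG hH, hab, hce] at this

/-- A connected triangle-free graph with diameter ≤ 1 has at most 2 vertices. -/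
lemma card_le_two_of_diam_le_one [Fintype V] {T : SimpleGraph V} (hT : T.IsTree)
    (hd : graphDiam T ≤ 1) : Fintype.card V ≤ 2 := by
  by_contra hc
  push_neg at hc
  -- get three distinct vertices
  obtain ⟨x, y, z, hxy, hxz, hyz⟩ := Fintype.two_lt_card_iff.mp (show 2 < Fintype.card V by omega)
  have hconn := hT.isConnected
  have hadj : ∀ a b : V, a ≠ b → T.Adj a b := by
    intro a b hab
    have h1 : T.dist a b ≤ 1 := le_trans (dist_le_graphDiam a b) hd
    have h2 : 0 < T.dist a b := hconn.pos_dist_of_ne hab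
    rw [← SimpleGraph.dist_eq_one_iff_adj]
    omega
  -- triangle x y z contradicts acyclicity via bridges
  have hbr := SimpleGraph.isAcyclic_iff_forall_adj_isBridge.mp hT.IsAcyclic (hadj x y hxy)
  rw [SimpleGraph.isBridge_iff] at hbr
  apply hbr
  rw [SimpleGraph.reachable_delete_edges_iff_exists_walk]
  refine ⟨SimpleGraph.Walk.cons (hadj x z hxz) (SimpleGraph.Walk.cons (hadj z y (Ne.symm hyz)) SimpleGraph.Walk.nil), ?_⟩
  intro hmem
  simp only [SimpleGraph.Walk.edges_cons, SimpleGraph.Walk.edges_nil, List.mem_cons,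
    List.not_mem_nil, or_false] at hmem
  rcases hmem with h | h
  · rw [Sym2.eq_iff] at h
    rcases h with ⟨-, h2⟩ | ⟨h1, -⟩
    · exact hyz h2
    · exact hxz h1
  · rw [Sym2.eq_iff] at h
    rcases h with ⟨h1, -⟩ | ⟨h1, h2⟩
    · exact hxz h1
    · exact hxy h1

lemma radioNumber_spec [Fintype V] (G : SimpleGraph V) :
    ∃ f : V → ℕ, IsRadioLabeling G f ∧ radioNumber G = radioSpan f := by
  classical
  have hne : {s | ∃ f : V → ℕ, IsRadioLabeling G f ∧ s = radioSpan f}.Nonempty := by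
    refine ⟨radioSpan (fun v => (Fintype.equivFin V v) * (graphDiam G + 1)),
      fun v => (Fintype.equivFin V v) * (graphDiam G + 1), ?_, rfl⟩
    intro a b hab
    have hne' : (Fintype.equivFin V a : ℕ) ≠ (Fintype.equivFin V b : ℕ) := by
      intro h
      exact hab ((Fintype.equivFin V).injective (Fin.ext h))
    have h1 : (1 : ℤ) ≤ |((Fintype.equivFin V a : ℕ) : ℤ) - ((Fintype.equivFin V b : ℕ) : ℤ)| := by
      have h0 : ((Fintype.equivFin V a : ℕ) : ℤ) ≠ ((Fintype.equivFin V b : ℕ) : ℤ) := by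
        exact_mod_cast hne'
      rcases abs_cases (((Fintype.equivFin V a : ℕ) : ℤ) - ((Fintype.equivFin V b : ℕ) : ℤ)) with
        ⟨h, h'⟩ | ⟨h, h'⟩ <;> omega
    have h2 : |((Fintype.equivFin V a : ℕ) * (graphDiam G + 1) : ℤ)
        - ((Fintype.equivFin V b : ℕ) * (graphDiam G + 1) : ℤ)|
        = |((Fintype.equivFin V a : ℕ) : ℤ) - ((Fintype.equivFin V b : ℕ) : ℤ)|
          * ((graphDiam G : ℤ) + 1) := by
      push_cast
      rw [← sub_mul, abs_mul,
        abs_of_nonneg (by positivity : (0:ℤ) ≤ (graphDiam G : ℤ) + 1)]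
    have h3 : (0 : ℤ) ≤ G.dist a b := by positivity
    push_cast
    push_cast at h2
    rw [h2]
    nlinarith [h1]
  obtain ⟨f, hf, hsp⟩ := Nat.sInf_mem hne
  exact ⟨f, hf, hsp⟩

lemma exists_sorted_enum [Fintype V] [Nonempty V] {f : V → ℕ} (hf : Function.Injective f) :
    ∃ u : ℕ → V,
      (∀ i j, i < j → j < Fintype.card V → f (u i) < f (u j)) ∧
      (∀ v, ∃ k, k < Fintype.card V ∧ u k = v) ∧
      (∀ M : V → ℤ, ∑ i ∈ Finset.range (Fintype.card V), M (u i) = ∑ v, M v) := by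
  classical
  set p := Fintype.card V with hp
  have hp0 : 0 < p := Fintype.card_pos
  set S : Finset ℕ := Finset.univ.image f with hS
  have hScard : S.card = p := by
    rw [hS, Finset.card_image_of_injective _ hf, Finset.card_univ]
  have hmem : ∀ i : Fin p, S.orderEmbOfFin hScard i ∈ S := fun i =>
    Finset.orderEmbOfFin_mem S hScard i
  have hgv : ∀ i : Fin p, ∃ v : V, f v = S.orderEmbOfFin hScard i := by
    intro i
    obtain ⟨v, _, hv⟩ := Finset.mem_image.mp (hmem i)
    exact ⟨v, hv⟩
  choose g hg using hgv
  let u : ℕ → V := fun n => if h : n < p then g ⟨n, h⟩ else Classical.arbitrary V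
  have hmono : ∀ i j, i < j → j < p → f (u i) < f (u j) := by
    intro i j hij hj
    have hi : i < p := lt_trans hij hj
    simp only [u, dif_pos hi, dif_pos hj]
    rw [hg, hg]
    exact (S.orderEmbOfFin hScard).strictMono (show (⟨i, hi⟩ : Fin p) < ⟨j, hj⟩ from hij)
  have hsurj : ∀ v, ∃ k, k < p ∧ u k = v := by
    intro v
    have hv : f v ∈ S := Finset.mem_image_of_mem f (Finset.mem_univ v)
    have hr := Finset.range_orderEmbOfFin S hScard
    have hvr : f v ∈ Set.range (S.orderEmbOfFin hScard) := by rw [hr]; exact_mod_cast hv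
    obtain ⟨i, hi⟩ := hvr
    refine ⟨i, i.2, ?_⟩
    simp only [u, dif_pos i.2]
    apply hf
    rw [hg]
    simp only [Fin.eta]
    rw [hi]
  refine ⟨u, hmono, hsurj, ?_⟩
  intro M
  refine Finset.sum_bij (fun i _ => u i) (fun i _ => Finset.mem_univ _) ?_ ?_ ?_
  · intro i hi j hj huv
    have huv' : u i = u j := huv
    simp only [Finset.mem_range] at hi hj
    by_contra hij
    rcases Nat.lt_or_ge i j with h | h
    · have := hmono i j h hj; rw [huv'] at this; omega
    · have h' : j < i := by omega
      have := hmono j i h' hi; rw [huv'] at this; omega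
  · intro v _
    obtain ⟨k, hk, hku⟩ := hsurj v
    exact ⟨k, Finset.mem_range.mpr hk, hku⟩
  · intro i _; rfl


lemma radioSpan_eq {V : Type*} [Fintype V] [Nonempty V] {f : V → ℕ} {u : ℕ → V}
    (hmono : ∀ i j, i < j → j < Fintype.card V → f (u i) < f (u j))
    (hsurj : ∀ v, ∃ k, k < Fintype.card V ∧ u k = v) :
    (radioSpan f : ℤ) = (f (u (Fintype.card V - 1)) : ℤ) - f (u 0) := by
  set p := Fintype.card V with hp
  have hp0 : 0 < p := Fintype.card_pos
  have hminmax : ∀ v, f (u 0) ≤ f v ∧ f v ≤ f (u (p - 1)) := by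
    intro v
    obtain ⟨k, hk, rfl⟩ := hsurj v
    constructor
    · rcases Nat.eq_zero_or_pos k with rfl | hkpos
      · exact le_refl _
      · exact (hmono 0 k hkpos hk).le
    · rcases Nat.lt_or_ge k (p - 1) with h | h
      · exact (hmono k (p - 1) h (by omega)).le
      · have : k = p - 1 := by omega
        rw [this]
  have h1 : radioSpan f ≤ f (u (p - 1)) - f (u 0) := by
    unfold radioSpan
    apply Finset.sup_le
    intro pr _
    have ha := hminmax pr.1
    have hb := hminmax pr.2
    show ((f pr.1 : ℤ) - (f pr.2 : ℤ)).natAbs ≤ _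
    omega
  have h2 : ((f (u (p - 1)) : ℤ) - (f (u 0) : ℤ)).natAbs ≤ radioSpan f := by
    unfold radioSpan
    exact Finset.le_sup (f := fun pr : V × V => ((f pr.1 : ℤ) - (f pr.2 : ℤ)).natAbs)
      (Finset.mem_univ (u (p - 1), u 0))
  have hm := (hminmax (u (p-1))).1
  omega

end AuxLemmas
/-- If both trees have exactly two weight centers and the lower bound is attained,
then both trees are P2, i.e. m = n = 2. -/
theorem stmt_11 {V₁ V₂ : Type*} [Fintype V₁] [Fintype V₂]
    (T₁ : SimpleGraph V₁) (T₂ : SimpleGraph V₂) (h₁ : T₁.IsTree) (h₂ : T₂.IsTree)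
    (hc₁ : {v | IsWeightCenter T₁ v}.ncard = 2)
    (hc₂ : {v | IsWeightCenter T₂ v}.ncard = 2)
    (heq : (radioNumber (T₁ □ T₂) : ℤ) =
      ((Fintype.card V₁ * Fintype.card V₂ : ℤ) - 1) *
          ((graphDiam T₁ : ℤ) + (graphDiam T₂ : ℤ) - 1) -
        2 * (Fintype.card V₂ : ℤ) * (totalLevel T₁ : ℤ) -
        2 * (Fintype.card V₁ : ℤ) * (totalLevel T₂ : ℤ) + 1) :
    Fintype.card V₁ = 2 ∧ Fintype.card V₂ = 2 := by
  classical
  -- extract the two weight centers of each tree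
  obtain ⟨w₁, w₁', hne₁, hset₁⟩ := Set.ncard_eq_two.mp hc₁
  obtain ⟨w₂, w₂', hne₂, hset₂⟩ := Set.ncard_eq_two.mp hc₂
  have hcs₁ : ∀ c, IsWeightCenter T₁ c ↔ c = w₁ ∨ c = w₁' := by
    intro c
    constructor
    · intro hc
      have : c ∈ {v | IsWeightCenter T₁ v} := hc
      rw [hset₁] at this
      simpa using this
    · intro hc
      have : c ∈ ({w₁, w₁'} : Set V₁) := by simpa using hc
      rw [← hset₁] at this
      exact this
  have hcs₂ : ∀ c, IsWeightCenter T₂ c ↔ c = w₂ ∨ c = w₂' := by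
    intro c
    constructor
    · intro hc
      have : c ∈ {v | IsWeightCenter T₂ v} := hc
      rw [hset₂] at this
      simpa using this
    · intro hc
      have : c ∈ ({w₂, w₂'} : Set V₂) := by simpa using hc
      rw [← hset₂] at this
      exact this
  have hW₁ : IsWeightCenter T₁ w₁ := (hcs₁ w₁).mpr (Or.inl rfl)
  have hW₁' : IsWeightCenter T₁ w₁' := (hcs₁ w₁').mpr (Or.inr rfl)
  have hW₂ : IsWeightCenter T₂ w₂ := (hcs₂ w₂).mpr (Or.inl rfl)
  have hW₂' : IsWeightCenter T₂ w₂' := (hcs₂ w₂').mpr (Or.inr rfl)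
  have hadj₁ : T₁.Adj w₁ w₁' := weight_centers_adj h₁ hW₁ hW₁' hne₁
  have hadj₂ : T₂.Adj w₂ w₂' := weight_centers_adj h₂ hW₂ hW₂' hne₂
  have hconn₁ := h₁.isConnected
  have hconn₂ := h₂.isConnected
  haveI : Nonempty V₁ := ⟨w₁⟩
  haveI : Nonempty V₂ := ⟨w₂⟩
  have hconnG : (T₁ □ T₂).Connected := hconn₁.boxProd hconn₂
  have hdG : graphDiam (T₁ □ T₂) = graphDiam T₁ + graphDiam T₂ :=
    graphDiam_boxProd hconn₁ hconn₂
  have hd₁pos : 1 ≤ graphDiam T₁ := by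
    have h1 : T₁.dist w₁ w₁' = 1 := SimpleGraph.dist_eq_one_iff_adj.mpr hadj₁
    have := dist_le_graphDiam (T := T₁) w₁ w₁'
    omega
  have hd₂pos : 1 ≤ graphDiam T₂ := by
    have h1 : T₂.dist w₂ w₂' = 1 := SimpleGraph.dist_eq_one_iff_adj.mpr hadj₂
    have := dist_le_graphDiam (T := T₂) w₂ w₂'
    omega
  have hcard₁ : 2 ≤ Fintype.card V₁ := Fintype.one_lt_card_iff.mpr ⟨w₁, w₁', hne₁⟩
  have hcard₂ : 2 ≤ Fintype.card V₂ := Fintype.one_lt_card_iff.mpr ⟨w₂, w₂', hne₂⟩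
  -- main claim: total diameter at most 2
  have hmain : graphDiam (T₁ □ T₂) ≤ 2 := by
    by_contra hd3'
    have hd3 : 3 ≤ graphDiam (T₁ □ T₂) := by omega
    obtain ⟨f, hrl, hrn⟩ := radioNumber_spec (T₁ □ T₂)
    have hfinj : Function.Injective f := by
      intro a b hab
      by_contra hne
      have h := hrl a b hne
      rw [hab] at h
      simp only [sub_self, abs_zero] at h
      have hd := dist_le_graphDiam (T := T₁ □ T₂) a b
      have hd' : ((T₁ □ T₂).dist a b : ℤ) ≤ (graphDiam (T₁ □ T₂) : ℤ) := by exact_mod_cast hd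
      omega
    obtain ⟨u, hmono, hsurj, husum⟩ := exists_sorted_enum hfinj
    set p := Fintype.card (V₁ × V₂) with hpdef
    have hpprod : p = Fintype.card V₁ * Fintype.card V₂ := Fintype.card_prod V₁ V₂
    have hp4 : 4 ≤ p := by
      rw [hpprod]; exact Nat.mul_le_mul hcard₁ hcard₂
    set dG := graphDiam (T₁ □ T₂) with hdGdef
    set lev : V₁ × V₂ → ℤ := fun v => (level T₁ v.1 : ℤ) + (level T₂ v.2 : ℤ) with hlevdef
    set F : ℕ → ℤ := fun i => (f (u i) : ℤ) with hFdef
    set defres : ℕ → ℤ :=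
      fun i => F (i+1) - F i - ((dG : ℤ) - 1) + lev (u i) + lev (u (i+1)) with hdefdef
    have hlevnn : ∀ v, 0 ≤ lev v := fun v => by simp only [hlevdef]; positivity
    have hFlt : ∀ k l, k < l → l < p → F k < F l := by
      intro k l h hl
      simp only [hFdef]
      exact_mod_cast hmono k l h hl
    have hne_ul : ∀ k l, k < l → l < p → u k ≠ u l := by
      intro k l hkl hl he
      have := hFlt k l hkl hl
      simp only [hFdef] at this
      simp only [he, lt_self_iff_false] at this
    have huinj : ∀ k l, k < p → l < p → u k = u l → k = l := by
      intro k l hk hl he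
      by_contra hne
      rcases Nat.lt_or_ge k l with h | h
      · exact hne_ul k l h hl he
      · exact hne_ul l k (by omega) hk he.symm
    have hradio : ∀ k l, k < l → l < p →
        (dG : ℤ) + 1 - ((T₁ □ T₂).dist (u k) (u l) : ℤ) ≤ F l - F k := by
      intro k l hkl hl
      have h := hrl (u k) (u l) (hne_ul k l hkl hl)
      have hF := hFlt k l hkl hl
      have hF' : (f (u k) : ℤ) < (f (u l) : ℤ) := by exact_mod_cast hmono k l hkl hl
      have habs : |(f (u k) : ℤ) - (f (u l) : ℤ)| = F l - F k := by
        rw [abs_sub_comm, abs_of_nonneg (by omega : (0:ℤ) ≤ (f (u l) : ℤ) - (f (u k) : ℤ))]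
      rw [habs] at h
      exact h
    have hdist12 : ∀ a b : V₁ × V₂,
        ((T₁ □ T₂).dist a b : ℤ) = (T₁.dist a.1 b.1 : ℤ) + (T₂.dist a.2 b.2 : ℤ) := by
      intro a b
      exact_mod_cast boxProd_dist hconn₁ hconn₂ a b
    have hd1lev : ∀ a b : V₁, (T₁.dist a b : ℤ) ≤ (level T₁ a : ℤ) + (level T₁ b : ℤ) + 1 := by
      intro a b; exact_mod_cast dist_le_level_add hconn₁ hadj₁ hcs₁ a b
    have hd2lev : ∀ a b : V₂, (T₂.dist a b : ℤ) ≤ (level T₂ a : ℤ) + (level T₂ b : ℤ) + 1 := by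
      intro a b; exact_mod_cast dist_le_level_add hconn₂ hadj₂ hcs₂ a b
    have hd1eq : ∀ a b : V₁, nearCtr T₁ w₁ w₁' a = nearCtr T₁ w₁ w₁' b →
        (T₁.dist a b : ℤ) ≤ (level T₁ a : ℤ) + (level T₁ b : ℤ) := by
      intro a b hab; exact_mod_cast dist_le_level_add_of_eq hconn₁ hcs₁ hab
    have hd2eq : ∀ a b : V₂, nearCtr T₂ w₂ w₂' a = nearCtr T₂ w₂ w₂' b →
        (T₂.dist a b : ℤ) ≤ (level T₂ a : ℤ) + (level T₂ b : ℤ) := by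
      intro a b hab; exact_mod_cast dist_le_level_add_of_eq hconn₂ hcs₂ hab
    have hdistB : ∀ a b : V₁ × V₂, ((T₁ □ T₂).dist a b : ℤ) ≤ lev a + lev b + 2 := by
      intro a b
      rw [hdist12]
      simp only [hlevdef]
      have := hd1lev a.1 b.1
      have := hd2lev a.2 b.2
      omega
    have hdefnn : ∀ i, i + 1 < p → 0 ≤ defres i := by
      intro i hi
      have hr := hradio i (i+1) (lt_add_one i) hi
      have hb := hdistB (u i) (u (i+1))
      simp only [hdefdef]
      omega
    -- master identity
    have htele : ∑ i ∈ Finset.range (p-1), (F (i+1) - F i) = F (p-1) - F 0 :=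
      Finset.sum_range_sub F (p-1)
    have hsum1 : ∑ i ∈ Finset.range (p-1), lev (u i) = (∑ v, lev v) - lev (u (p-1)) := by
      have hs := husum lev
      rw [show p = (p-1)+1 by omega, Finset.sum_range_succ] at hs
      omega
    have hsum2 : ∑ i ∈ Finset.range (p-1), lev (u (i+1)) = (∑ v, lev v) - lev (u 0) := by
      have hs := husum lev
      rw [show p = (p-1)+1 by omega, Finset.sum_range_succ'] at hs
      omega
    have hΛ : (∑ v : V₁ × V₂, lev v) =
        (Fintype.card V₂ : ℤ) * (totalLevel T₁ : ℤ) + (Fintype.card V₁ : ℤ) * (totalLevel T₂ : ℤ) := by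
      simp only [hlevdef]
      rw [Fintype.sum_prod_type]
      simp only [Finset.sum_add_distrib, Finset.sum_const, Finset.card_univ, nsmul_eq_mul]
      rw [totalLevel, totalLevel]
      push_cast
      rw [← Finset.mul_sum]
    have hspan : (radioSpan f : ℤ) = F (p-1) - F 0 := by
      have h := radioSpan_eq hmono hsurj
      simp only [hFdef]
      exact h
    have hmaster : lev (u 0) + lev (u (p-1)) + ∑ i ∈ Finset.range (p-1), defres i = 1 := by
      have hsd : ∑ i ∈ Finset.range (p-1), defres i =
          (F (p-1) - F 0) - ((p:ℤ)-1)*((dG:ℤ)-1)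
            + ((∑ v, lev v) - lev (u (p-1))) + ((∑ v, lev v) - lev (u 0)) := by
        have hc : ((p - 1 : ℕ) : ℤ) = (p : ℤ) - 1 := by
          have h1 : 1 ≤ p := by omega
          push_cast [Nat.cast_sub h1]
          ring
        simp only [hdefdef]
        rw [Finset.sum_add_distrib, Finset.sum_add_distrib, Finset.sum_sub_distrib,
          Finset.sum_const, Finset.card_range, htele, hsum1, hsum2, nsmul_eq_mul, hc]
      have hrneq : (radioNumber (T₁ □ T₂) : ℤ) = F (p-1) - F 0 := by
        rw [hrn]; exact hspan
      rw [hrneq] at heq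
      have hdg' : (dG : ℤ) = (graphDiam T₁ : ℤ) + (graphDiam T₂ : ℤ) := by
        rw [hdGdef]; exact_mod_cast hdG
      have hpp : (p : ℤ) = (Fintype.card V₁ : ℤ) * (Fintype.card V₂ : ℤ) := by
        rw [hpprod]; push_cast; ring
      rw [hsd, hΛ]
      rw [heq, hdg', hpp]
      ring
    have hstep : ∀ i, i + 1 < p → defres i = 0 →
        nearCtr T₁ w₁ w₁' (u i).1 ≠ nearCtr T₁ w₁ w₁' (u (i+1)).1 ∧
        nearCtr T₂ w₂ w₂' (u i).2 ≠ nearCtr T₂ w₂ w₂' (u (i+1)).2 := by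
      intro i hi hdef
      have hr := hradio i (i+1) (lt_add_one i) hi
      have hb := hdistB (u i) (u (i+1))
      simp only [hdefdef] at hdef
      have hDeq : ((T₁ □ T₂).dist (u i) (u (i+1)) : ℤ) = lev (u i) + lev (u (i+1)) + 2 := by
        omega
      have h12 := hdist12 (u i) (u (i+1))
      simp only [hlevdef] at hDeq
      constructor
      · intro hctr
        have hA := hd1eq _ _ hctr
        have hB := hd2lev (u i).2 (u (i+1)).2
        omega
      · intro hctr
        have hA := hd2eq _ _ hctr
        have hB := hd1lev (u i).1 (u (i+1)).1
        omega
    have hpos : ∀ i, i + 2 < p → defres i = 0 → defres (i+1) = 0 →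
        2 * lev (u (i+1)) ≤ (dG:ℤ) - 3 := by
      intro i hi hd0 hd1
      obtain ⟨hc1a, hc2a⟩ := hstep i (by omega) hd0
      obtain ⟨hc1b, hc2b⟩ := hstep (i+1) (by omega) hd1
      have he1 : nearCtr T₁ w₁ w₁' (u i).1 = nearCtr T₁ w₁ w₁' (u (i+2)).1 := by
        rcases nearCtr_mem T₁ w₁ w₁' (u i).1 with h | h <;>
        rcases nearCtr_mem T₁ w₁ w₁' (u (i+1)).1 with h' | h' <;>
        rcases nearCtr_mem T₁ w₁ w₁' (u (i+2)).1 with h'' | h'' <;>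
        first
          | exact absurd (h.trans h'.symm) hc1a
          | exact absurd (h'.trans h''.symm) hc1b
          | rw [h, h'']
      have he2 : nearCtr T₂ w₂ w₂' (u i).2 = nearCtr T₂ w₂ w₂' (u (i+2)).2 := by
        rcases nearCtr_mem T₂ w₂ w₂' (u i).2 with h | h <;>
        rcases nearCtr_mem T₂ w₂ w₂' (u (i+1)).2 with h' | h' <;>
        rcases nearCtr_mem T₂ w₂ w₂' (u (i+2)).2 with h'' | h'' <;>
        first
          | exact absurd (h.trans h'.symm) hc2a
          | exact absurd (h'.trans h''.symm) hc2b
          | rw [h, h'']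
      have hd := hradio i (i+2) (by omega) (by omega)
      have hD : ((T₁ □ T₂).dist (u i) (u (i+2)) : ℤ) ≤ lev (u i) + lev (u (i+2)) := by
        have hA := hd1eq _ _ he1
        have hB := hd2eq _ _ he2
        have h12 := hdist12 (u i) (u (i+2))
        simp only [hlevdef]
        omega
      simp only [hdefdef] at hd0 hd1
      have hd1' : F (i+2) - F (i+1) - ((dG : ℤ) - 1) + lev (u (i+1)) + lev (u (i+2)) = 0 := hd1
      omega
    obtain ⟨x, x', hx⟩ := exists_graphDiam (T := T₁)
    obtain ⟨y, y', hy⟩ := exists_graphDiam (T := T₂)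
    have hxne : x ≠ x' := by
      intro h
      rw [h, SimpleGraph.dist_self] at hx
      omega
    have hyne : y ≠ y' := by
      intro h
      rw [h, SimpleGraph.dist_self] at hy
      omega
    have hdgsum : (dG : ℤ) = (graphDiam T₁ : ℤ) + (graphDiam T₂ : ℤ) := by exact_mod_cast hdG
    have hPQ : (dG:ℤ) - 2 ≤ lev (x, y) + lev (x', y') := by
      simp only [hlevdef]
      have hA := hd1lev x x'
      have hB := hd2lev y y'
      rw [hx] at hA
      rw [hy] at hB
      omega
    have hRS : (dG:ℤ) - 2 ≤ lev (x, y') + lev (x', y) := by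
      simp only [hlevdef]
      have hA := hd1lev x x'
      have hB := hd2lev y y'
      rw [hx] at hA
      rw [hy] at hB
      omega
    by_cases hall : ∀ i ∈ Finset.range (p-1), defres i = 0
    · have hsum0 : ∑ i ∈ Finset.range (p-1), defres i = 0 := Finset.sum_eq_zero hall
      have hend : lev (u 0) + lev (u (p-1)) = 1 := by omega
      have hsmall : ∀ v : V₁ × V₂, v ≠ u 0 → v ≠ u (p-1) → 2 * lev v ≤ (dG:ℤ) - 3 := by
        intro v hv0 hvl
        obtain ⟨k, hk, rfl⟩ := hsurj v
        have hk0 : k ≠ 0 := fun h => hv0 (by rw [h])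
        have hkl : k ≠ p - 1 := fun h => hvl (by rw [h])
        obtain ⟨i, rfl⟩ : ∃ i, k = i + 1 := ⟨k - 1, by omega⟩
        exact hpos i (by omega) (hall i (Finset.mem_range.mpr (by omega)))
          (hall (i+1) (Finset.mem_range.mpr (by omega)))
      have hEor1 : ((x,y) = u 0 ∨ (x,y) = u (p-1)) ∨ ((x',y') = u 0 ∨ (x',y') = u (p-1)) := by
        by_contra hcon
        push_neg at hcon
        obtain ⟨⟨ha1, ha2⟩, ⟨ha3, ha4⟩⟩ := hcon
        have hs1 := hsmall _ ha1 ha2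
        have hs2 := hsmall _ ha3 ha4
        omega
      have hEor2 : ((x,y') = u 0 ∨ (x,y') = u (p-1)) ∨ ((x',y) = u 0 ∨ (x',y) = u (p-1)) := by
        by_contra hcon
        push_neg at hcon
        obtain ⟨⟨ha1, ha2⟩, ⟨ha3, ha4⟩⟩ := hcon
        have hs1 := hsmall _ ha1 ha2
        have hs2 := hsmall _ ha3 ha4
        omega
      have hne_PR : ((x,y) : V₁ × V₂) ≠ (x,y') := fun h => hyne (congrArg Prod.snd h)
      have hne_PS : ((x,y) : V₁ × V₂) ≠ (x',y) := fun h => hxne (congrArg Prod.fst h)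
      have hne_PQ : ((x,y) : V₁ × V₂) ≠ (x',y') := fun h => hxne (congrArg Prod.fst h)
      have hne_QR : ((x',y') : V₁ × V₂) ≠ (x,y') := fun h => hxne ((congrArg Prod.fst h).symm)
      have hne_QS : ((x',y') : V₁ × V₂) ≠ (x',y) := fun h => hyne ((congrArg Prod.snd h).symm)
      have hne_RS : ((x,y') : V₁ × V₂) ≠ (x',y) := fun h => hxne (congrArg Prod.fst h)
      have hfin : ∀ A B C D : V₁ × V₂,
          (dG:ℤ) - 2 ≤ lev A + lev B → (dG:ℤ) - 2 ≤ lev C + lev D →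
          (A = u 0 ∨ A = u (p-1)) → (C = u 0 ∨ C = u (p-1)) → A ≠ C →
          B ≠ A → B ≠ C → D ≠ A → D ≠ C → False := by
        intro A B C D hAB hCD hEA hEC hAC hBA hBC hDA hDC
        have hkey : lev A + lev C = 1 ∧
            (∀ z : V₁ × V₂, z ≠ A → z ≠ C → z ≠ u 0 ∧ z ≠ u (p-1)) := by
          rcases hEA with rfl | rfl <;> rcases hEC with rfl | rfl
          · exact absurd rfl hAC
          · exact ⟨hend, fun z hz1 hz2 => ⟨hz1, hz2⟩⟩
          · exact ⟨by omega, fun z hz1 hz2 => ⟨hz2, hz1⟩⟩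
          · exact absurd rfl hAC
        obtain ⟨hAC1, hrest⟩ := hkey
        obtain ⟨hB1, hB2⟩ := hrest B hBA hBC
        obtain ⟨hD1, hD2⟩ := hrest D hDA hDC
        have hsB := hsmall B hB1 hB2
        have hsD := hsmall D hD1 hD2
        omega
      rcases hEor1 with h | h <;> rcases hEor2 with h' | h'
      · exact hfin (x,y) (x',y') (x,y') (x',y) hPQ hRS h h' hne_PR hne_PQ.symm hne_QR
          hne_PS.symm hne_RS.symm
      · exact hfin (x,y) (x',y') (x',y) (x,y') hPQ (by omega) h h' hne_PS hne_PQ.symm hne_QS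
          hne_PR.symm hne_RS
      · exact hfin (x',y') (x,y) (x,y') (x',y) (by omega) hRS h h' hne_QR hne_PQ hne_PR
          hne_QS.symm hne_RS.symm
      · exact hfin (x',y') (x,y) (x',y) (x,y') (by omega) (by omega) h h' hne_QS hne_PQ hne_PS
          hne_QR.symm hne_RS
    · push_neg at hall
      obtain ⟨i0, hi0mem, hi0ne⟩ := hall
      have hi0lt : i0 < p - 1 := Finset.mem_range.mp hi0mem
      have hnn : ∀ j ∈ Finset.range (p-1), 0 ≤ defres j := by
        intro j hj
        exact hdefnn j (by have := Finset.mem_range.mp hj; omega)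
      have hsplit : defres i0 + ∑ j ∈ (Finset.range (p-1)).erase i0, defres j
          = ∑ j ∈ Finset.range (p-1), defres j := Finset.add_sum_erase _ defres hi0mem
      have herasenn : 0 ≤ ∑ j ∈ (Finset.range (p-1)).erase i0, defres j :=
        Finset.sum_nonneg (fun j hj => hnn j (Finset.mem_of_mem_erase hj))
      have hi0pos : 1 ≤ defres i0 := by
        have := hnn i0 hi0mem
        omega
      have hl0 := hlevnn (u 0)
      have hl1 := hlevnn (u (p-1))
      have hlev00 : lev (u 0) = 0 := by omega
      have hlev01 : lev (u (p-1)) = 0 := by omega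
      have hdef1 : defres i0 = 1 := by omega
      have heraszero : ∑ j ∈ (Finset.range (p-1)).erase i0, defres j = 0 := by omega
      have hothers : ∀ j ∈ Finset.range (p-1), j ≠ i0 → defres j = 0 := by
        intro j hj hji
        have hj' : j ∈ (Finset.range (p-1)).erase i0 := Finset.mem_erase.mpr ⟨hji, hj⟩
        exact (Finset.sum_eq_zero_iff_of_nonneg
          (fun k hk => hnn k (Finset.mem_of_mem_erase hk))).mp heraszero j hj'
      have hH : ∀ v : V₁ × V₂, (dG:ℤ) - 2 ≤ 2 * lev v → v = u i0 ∨ v = u (i0+1) := by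
        intro v hv
        obtain ⟨k, hk, rfl⟩ := hsurj v
        have hk0 : k ≠ 0 := by
          intro h
          rw [h] at hv
          omega
        have hkl : k ≠ p - 1 := by
          intro h
          rw [h] at hv
          omega
        obtain ⟨i, rfl⟩ : ∃ i, k = i + 1 := ⟨k - 1, by omega⟩
        by_contra hcon
        push_neg at hcon
        obtain ⟨hc1, hc2⟩ := hcon
        have hA : i ≠ i0 := fun h => hc2 (by rw [h])
        have hB : i + 1 ≠ i0 := fun h => hc1 (by rw [h])
        have := hpos i (by omega) (hothers i (Finset.mem_range.mpr (by omega)) hA)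
          (hothers (i+1) (Finset.mem_range.mpr (by omega)) hB)
        omega
      have hlevpair : ∀ (a : V₁) (b : V₂), lev (a, b) = (level T₁ a : ℤ) + (level T₂ b : ℤ) :=
        fun a b => rfl
      have hi01 : i0 + 1 < p := by omega
      -- core contradiction when the two distinguished vertices share the first coordinate
      have core1 : ∀ (z : V₁) (t t' : V₂), t ≠ t' → u i0 = (z, t) → u (i0+1) = (z, t') →
          (dG:ℤ) - 2 ≤ 2 * lev (z, t) → (dG:ℤ) - 2 ≤ 2 * lev (z, t') → False := by
        intro z t t' htt hu0 hu1 hlt hlt'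
        have hr := hradio i0 (i0+1) (lt_add_one i0) hi01
        have hdef1' := hdef1
        simp only [hdefdef] at hdef1'
        rw [hu0, hu1] at hdef1'
        have hdist : ((T₁ □ T₂).dist (u i0) (u (i0+1)) : ℤ) = (T₂.dist t t' : ℤ) := by
          rw [hdist12, hu0, hu1]
          simp [SimpleGraph.dist_self]
        rw [hdist] at hr
        have hd2diam : (T₂.dist t t' : ℤ) ≤ (graphDiam T₂ : ℤ) := by
          exact_mod_cast dist_le_graphDiam t t'
        have hd1le : graphDiam T₁ ≤ 1 := by omega
        have hcard2 : Fintype.card V₁ = 2 :=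
          le_antisymm (card_le_two_of_diam_le_one h₁ hd1le) hcard₁
        have huniv : ∀ a : V₁, a = w₁ ∨ a = w₁' := by
          have hpair : ({w₁, w₁'} : Finset V₁) = Finset.univ := by
            apply Finset.eq_univ_of_card
            rw [Finset.card_pair hne₁, hcard2]
          intro a
          have ha : a ∈ ({w₁, w₁'} : Finset V₁) := hpair ▸ Finset.mem_univ a
          simpa using ha
        have hlz : ∀ a : V₁, (level T₁ a : ℤ) = 0 := by
          intro a
          have hmin := level_eq_min hcs₁ a
          have h0 : level T₁ a = 0 := by
            rcases huniv a with rfl | rfl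
            · rw [hmin, SimpleGraph.dist_self]; omega
            · rw [hmin]
              rw [SimpleGraph.dist_self (G := T₁) (v := a)]
              omega
          rw [h0]; rfl
        set zb := if z = w₁ then w₁' else w₁ with hzbdef
        have hzbne : zb ≠ z := by
          rw [hzbdef]
          split
          · next h => rw [h]; exact hne₁.symm
          · next h =>
              rcases huniv z with h' | h'
              · exact absurd h' h
              · rw [h']; exact hne₁
        have hlevzb : (dG:ℤ) - 2 ≤ 2 * lev (zb, t) := by
          rw [hlevpair] at hlt ⊢
          have ha := hlz z
          have hb := hlz zb
          omega
        rcases hH (zb, t) hlevzb with hc | hc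
        · rw [hu0] at hc
          exact hzbne (congrArg Prod.fst hc)
        · rw [hu1] at hc
          exact hzbne (congrArg Prod.fst hc)
      -- core contradiction when they share the second coordinate
      have core2 : ∀ (t : V₂) (z z' : V₁), z ≠ z' → u i0 = (z, t) → u (i0+1) = (z', t) →
          (dG:ℤ) - 2 ≤ 2 * lev (z, t) → (dG:ℤ) - 2 ≤ 2 * lev (z', t) → False := by
        intro t z z' hzz hu0 hu1 hlt hlt'
        have hr := hradio i0 (i0+1) (lt_add_one i0) hi01
        have hdef1' := hdef1
        simp only [hdefdef] at hdef1'
        rw [hu0, hu1] at hdef1'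
        have hdist : ((T₁ □ T₂).dist (u i0) (u (i0+1)) : ℤ) = (T₁.dist z z' : ℤ) := by
          rw [hdist12, hu0, hu1]
          simp [SimpleGraph.dist_self]
        rw [hdist] at hr
        have hd1diam : (T₁.dist z z' : ℤ) ≤ (graphDiam T₁ : ℤ) := by
          exact_mod_cast dist_le_graphDiam z z'
        have hd2le : graphDiam T₂ ≤ 1 := by omega
        have hcard2' : Fintype.card V₂ = 2 :=
          le_antisymm (card_le_two_of_diam_le_one h₂ hd2le) hcard₂
        have huniv : ∀ a : V₂, a = w₂ ∨ a = w₂' := by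
          have hpair : ({w₂, w₂'} : Finset V₂) = Finset.univ := by
            apply Finset.eq_univ_of_card
            rw [Finset.card_pair hne₂, hcard2']
          intro a
          have ha : a ∈ ({w₂, w₂'} : Finset V₂) := hpair ▸ Finset.mem_univ a
          simpa using ha
        have hlz : ∀ a : V₂, (level T₂ a : ℤ) = 0 := by
          intro a
          have hmin := level_eq_min hcs₂ a
          have h0 : level T₂ a = 0 := by
            rcases huniv a with rfl | rfl
            · rw [hmin, SimpleGraph.dist_self]; omega
            · rw [hmin]
              rw [SimpleGraph.dist_self (G := T₂) (v := a)]
              omega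
          rw [h0]; rfl
        set tb := if t = w₂ then w₂' else w₂ with htbdef
        have htbne : tb ≠ t := by
          rw [htbdef]
          split
          · next h => rw [h]; exact hne₂.symm
          · next h =>
              rcases huniv t with h' | h'
              · exact absurd h' h
              · rw [h']; exact hne₂
        have hlevtb : (dG:ℤ) - 2 ≤ 2 * lev (z, tb) := by
          rw [hlevpair] at hlt ⊢
          have ha := hlz t
          have hb := hlz tb
          omega
        rcases hH (z, tb) hlevtb with hc | hc
        · rw [hu0] at hc
          exact htbne (congrArg Prod.snd hc)
        · rw [hu1] at hc
          exact htbne (congrArg Prod.snd hc)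
      have getord : ∀ A C : V₁ × V₂, A ≠ C → (A = u i0 ∨ A = u (i0+1)) →
          (C = u i0 ∨ C = u (i0+1)) →
          (u i0 = A ∧ u (i0+1) = C) ∨ (u i0 = C ∧ u (i0+1) = A) := by
        intro A C hAC hA hC
        rcases hA with h | h <;> rcases hC with h' | h'
        · exact absurd (h.trans h'.symm) hAC
        · exact Or.inl ⟨h.symm, h'.symm⟩
        · exact Or.inr ⟨h'.symm, h.symm⟩
        · exact absurd (h.trans h'.symm) hAC
      have hne_PR : ((x,y) : V₁ × V₂) ≠ (x,y') := fun h => hyne (congrArg Prod.snd h)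
      have hne_PS : ((x,y) : V₁ × V₂) ≠ (x',y) := fun h => hxne (congrArg Prod.fst h)
      have hne_QR : ((x',y') : V₁ × V₂) ≠ (x,y') := fun h => hxne ((congrArg Prod.fst h).symm)
      have hne_QS : ((x',y') : V₁ × V₂) ≠ (x',y) := fun h => hyne ((congrArg Prod.snd h).symm)
      have hHor1 : (dG:ℤ) - 2 ≤ 2 * lev (x,y) ∨ (dG:ℤ) - 2 ≤ 2 * lev (x',y') := by
        by_contra hcon
        push_neg at hcon
        omega
      have hHor2 : (dG:ℤ) - 2 ≤ 2 * lev (x,y') ∨ (dG:ℤ) - 2 ≤ 2 * lev (x',y) := by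
        by_contra hcon
        push_neg at hcon
        omega
      rcases hHor1 with hA | hA <;> rcases hHor2 with hC | hC
      · rcases getord (x,y) (x,y') hne_PR (hH _ hA) (hH _ hC) with ⟨h1, h2⟩ | ⟨h1, h2⟩
        · exact core1 x y y' hyne h1 h2 hA hC
        · exact core1 x y' y (Ne.symm hyne) h1 h2 hC hA
      · rcases getord (x,y) (x',y) hne_PS (hH _ hA) (hH _ hC) with ⟨h1, h2⟩ | ⟨h1, h2⟩
        · exact core2 y x x' hxne h1 h2 hA hC
        · exact core2 y x' x (Ne.symm hxne) h1 h2 hC hA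
      · rcases getord (x',y') (x,y') hne_QR (hH _ hA) (hH _ hC) with ⟨h1, h2⟩ | ⟨h1, h2⟩
        · exact core2 y' x' x (Ne.symm hxne) h1 h2 hA hC
        · exact core2 y' x x' hxne h1 h2 hC hA
      · rcases getord (x',y') (x',y) hne_QS (hH _ hA) (hH _ hC) with ⟨h1, h2⟩ | ⟨h1, h2⟩
        · exact core1 x' y' y (Ne.symm hyne) h1 h2 hA hC
        · exact core1 x' y y' hyne h1 h2 hC hA
  constructor
  · refine le_antisymm (card_le_two_of_diam_le_one h₁ (by omega)) hcard₁
  · refine le_antisymm (card_le_two_of_diam_le_one h₂ (by omega)) hcard₂
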